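/- arXiv:2210.00655 — 4 statements merged into one kernel-verified Lean document; each statement's English description precedes it below -/
import Mathlib

section
/- Define W : \mathbb{Z} \times List(Bool) \to \mathbb{R} recursively by W(\Delta, []) = 0 and W(\Delta, b :: s) = 2^{-(\Delta+2)} \cdot (1 if b = true else 0) + (1 - 2^{-(\Delta+2)}) \cdot W(\Delta + (-1 if b = true else +1), s). Then for every integer \Delta \ge 0 and every list s of Booleans in which the number of true entries exceeds the number of false entries by strictly more than \Delta, we have W(\Delta, s) \ge (1/3) \cdot (1 - 2^{-(\Delta+1)}). -/
/-- `W Δ s` is the winning probability of the bit-sampling strategy that, when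
the count of zeros minus ones so far is `Δ`, commits to the next bit with
probability `2^{-(Δ+2)}`. -/
noncomputable def W : ℤ → List Bool → ℝ
  | _, [] => 0
  | Δ, b :: s =>
      (2 : ℝ) ^ (-(Δ + 2)) * (if b then 1 else 0) +
        (1 - (2 : ℝ) ^ (-(Δ + 2))) * W (Δ + if b then -1 else 1) s

lemma W_ge_aux (s : List Bool) : ∀ Δ : ℤ, -2 ≤ Δ →
    (s.count false : ℤ) + Δ < (s.count true : ℤ) →
    W Δ s ≥ (1 / 3) * (1 - (2 : ℝ) ^ (-(Δ + 1))) := by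
  induction s with
  | nil =>
    intro Δ h2 hc
    simp only [List.count_nil, Nat.cast_zero] at hc
    have hΔ : Δ ≤ -1 := by omega
    have h1 : (1 : ℝ) ≤ (2 : ℝ) ^ (-(Δ + 1)) := by
      apply one_le_zpow₀ (by norm_num : (1:ℝ) ≤ 2)
      omega
    simp only [W]
    linarith
  | cons b s ih =>
    intro Δ h2 hc
    by_cases hΔ2 : Δ = -2
    · subst hΔ2
      have hval : (1:ℝ)/3 * (1 - (2:ℝ) ^ (-(-2 + 1 : ℤ))) = -(1/3) := by norm_num
      rw [hval]
      simp only [W]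
      norm_num
      cases b <;> simp <;> norm_num
    · have h1 : -1 ≤ Δ := by omega
      set p : ℝ := (2 : ℝ) ^ (-(Δ + 2)) with hp_def
      have hp : (0:ℝ) < p := zpow_pos (by norm_num) _
      have hple : p ≤ 1/2 := by
        calc p ≤ (2:ℝ) ^ (-1 : ℤ) :=
              zpow_le_zpow_right₀ (by norm_num) (by omega)
          _ = 1/2 := by norm_num
      have hrel1 : (2:ℝ) ^ (-(Δ + 1)) = 2 * p := by
        rw [hp_def, show -(Δ+1) = -(Δ+2)+1 by ring,
          zpow_add₀ (by norm_num : (2:ℝ) ≠ 0)]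
        ring
      cases b
      · -- b = false
        have hc' : (s.count false : ℤ) + (Δ + 1) < (s.count true : ℤ) := by
          simp [List.count_cons] at hc
          push_cast at hc
          omega
        have hW := ih (Δ + 1) (by omega) hc'
        have hrel2 : (2:ℝ) ^ (-(Δ + 1 + 1)) = p := by
          rw [hp_def]; ring_nf
        rw [hrel2] at hW
        simp only [W, if_false, Bool.false_eq_true]
        rw [← hp_def, hrel1]
        have key : (1 - p) * W (Δ + 1) s ≥ (1 - p) * ((1/3) * (1 - p)) :=
          mul_le_mul_of_nonneg_left hW (by linarith)
        nlinarith [sq_nonneg p]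
      · -- b = true
        have hc' : (s.count false : ℤ) + (Δ - 1) < (s.count true : ℤ) := by
          simp [List.count_cons] at hc
          push_cast at hc
          omega
        have hW := ih (Δ - 1) (by omega) hc'
        have hrel3 : (2:ℝ) ^ (-(Δ - 1 + 1)) = 4 * p := by
          rw [hp_def, show -(Δ-1+1) = -(Δ+2)+2 by ring,
            zpow_add₀ (by norm_num : (2:ℝ) ≠ 0)]
          norm_num
          ring
        rw [hrel3] at hW
        simp only [W, if_true]
        rw [show Δ + -1 = Δ - 1 by ring, ← hp_def, hrel1]
        have key : (1 - p) * W (Δ - 1) s ≥ (1 - p) * ((1/3) * (1 - 4 * p)) :=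
          mul_le_mul_of_nonneg_left hW (by linarith)
        nlinarith [sq_nonneg p]

/-- If the number of `true` entries of `s` exceeds the number of `false`
entries by strictly more than `Δ ≥ 0`, then `W Δ s ≥ (1/3)(1 - 2^{-(Δ+1)})`. -/
theorem stmt_7 (Δ : ℤ) (hΔ : 0 ≤ Δ) (s : List Bool)
    (hs : (s.count false : ℤ) + Δ < (s.count true : ℤ)) :
    W Δ s ≥ (1 / 3) * (1 - (2 : ℝ) ^ (-(Δ + 1))) := by
  exact W_ge_aux s Δ (by omega) hs
end

section
/- Define W : \mathbb{Z} \times List(Bool) \to \mathbb{R} recursively by W(\Delta, []) = 0 and W(\Delta, b :: s) = 2^{-(\Delta+2)} \cdot (1 if b = true else 0) + (1 - 2^{-(\Delta+2)}) \cdot W(\Delta + (-1 if b = true else +1), s). Then for every list s of Booleans in which strictly more than half of the entries are true, W(0, s) \ge 1/6. (In the bit sampling game, the player's strategy of committing with probability 2^{-(\Delta+2)} wins with probability at least 1/6 against any such sequence.) -/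
lemma W_ge (s : List Bool) : ∀ Δ : ℤ, -2 ≤ Δ →
    Δ < 2 * (s.count true : ℤ) - s.length →
    W Δ s ≥ 1 / 3 - (2 : ℝ) ^ (-Δ - 1) / 3 := by
  induction s with
  | nil =>
      intro Δ h2 hΔ
      simp only [List.count_nil, List.length_nil] at hΔ
      have hone : (2 : ℝ) ^ (0 : ℤ) ≤ (2 : ℝ) ^ (-Δ - 1) :=
        zpow_le_zpow_right₀ one_le_two (by omega)
      simp only [zpow_zero] at hone
      simp only [W]
      linarith
  | cons b s ih =>
      intro Δ h2 hΔ
      set t : ℝ := (2 : ℝ) ^ (-(Δ + 2)) with ht_def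
      have ht0 : 0 < t := zpow_pos (by norm_num) _
      have e2 : (2 : ℝ) ^ (-Δ - 1) = 2 * t := by
        rw [ht_def, show (-Δ - 1) = 1 + (-(Δ + 2)) by ring,
          zpow_add₀ (by norm_num : (2 : ℝ) ≠ 0), zpow_one]
      cases b with
      | false =>
          have ht1 : t ≤ 1 := by
            have : (2 : ℝ) ^ (-(Δ + 2)) ≤ (2 : ℝ) ^ (0 : ℤ) :=
              zpow_le_zpow_right₀ one_le_two (by omega)
            simpa [ht_def] using this
          have hIH := ih (Δ + 1) (by omega) (by
            simp only [List.count_cons, List.length_cons] at hΔ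
            norm_num at hΔ
            push_cast at hΔ ⊢
            omega)
          have e1 : (2 : ℝ) ^ (-(Δ + 1) - 1) = t := by
            rw [ht_def]; ring_nf
          rw [e1] at hIH
          have hmul : (1 - t) * (1 / 3 - t / 3) ≤ (1 - t) * W (Δ + 1) s :=
            mul_le_mul_of_nonneg_left hIH (by linarith)
          simp only [W, if_false, Bool.false_eq_true]
          rw [e2]
          nlinarith [sq_nonneg t]
      | true =>
          rcases eq_or_lt_of_le h2 with h | h
          · -- Δ = -2, commit probability is 1
            have : Δ = -2 := h.symm
            subst this
            simp only [W, if_true]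
            norm_num
          · -- Δ ≥ -1
            have ht1 : t ≤ 1 / 2 := by
              have : (2 : ℝ) ^ (-(Δ + 2)) ≤ (2 : ℝ) ^ (-1 : ℤ) :=
                zpow_le_zpow_right₀ one_le_two (by omega)
              simpa [ht_def] using this
            have hIH := ih (Δ - 1) (by omega) (by
              simp only [List.count_cons, List.length_cons] at hΔ ⊢
              push_cast at hΔ ⊢
              omega)
            have e1 : (2 : ℝ) ^ (-(Δ - 1) - 1) = 4 * t := by
              rw [ht_def, show (-(Δ - 1) - 1) = 2 + (-(Δ + 2)) by ring,
                zpow_add₀ (by norm_num : (2 : ℝ) ≠ 0)]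
              norm_num
            rw [e1] at hIH
            have hmul : (1 - t) * (1 / 3 - 4 * t / 3) ≤ (1 - t) * W (Δ - 1) s :=
              mul_le_mul_of_nonneg_left hIH (by linarith)
            simp only [W, if_true]
            rw [e2]
            have : Δ + -1 = Δ - 1 := by ring
            rw [this]
            nlinarith [sq_nonneg t]

/-- If strictly more than half of the entries of `s` are `true`, then the
bit-sampling strategy wins with probability at least `1/6`. -/
theorem stmt_8 (s : List Bool) (hs : s.length < 2 * s.count true) :
    W 0 s ≥ 1 / 6 := by
  have h := W_ge s 0 (by norm_num) (by push_cast; omega)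
  norm_num at h
  linarith
end

section
/- Define V : \mathbb{N}^3 \to \mathbb{R} recursively by V(0, b, g) = 0 and, for t \ge 1, V(t, b, g) = max( (1 - (b+g)/t) \cdot V(t-1, b, g) + g/t , (1 - (b+g)/t) \cdot V(t-1, b, g) + (g/t) \cdot V(t-1, b, g-1) + (b/t) \cdot V(t-1, b-1, g) ) (with natural-number subtraction, the terms with coefficient 0 being irrelevant). Then for all natural numbers t, b, g with 1 \le b + g \le t, we have V(t, b, g) \le g/(b+g). -/
/-- `V t b g` is the optimal probability of accepting a good option when `t`
options remain in a uniformly random order, `g` of them good and `b` bad; the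
first argument of the `max` corresponds to committing and the second to
observing the next option. -/
noncomputable def V : ℕ → ℕ → ℕ → ℝ
  | 0, _, _ => 0
  | t + 1, b, g =>
      max ((1 - ((b : ℝ) + g) / (t + 1)) * V t b g + (g : ℝ) / (t + 1))
        ((1 - ((b : ℝ) + g) / (t + 1)) * V t b g +
          ((g : ℝ) / (t + 1)) * V t b (g - 1) + ((b : ℝ) / (t + 1)) * V t (b - 1) g)

/-!
The fraction `g / (b + g)` of good options among those still in play is a supermartingale
along the draws, and committing wins with probability exactly that fraction. Hence it
dominates both branches of the recursion, and induction on `t` bounds `V` by it.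
-/

noncomputable def goodFraction (b g : ℕ) : ℝ := g / (b + g)

lemma natCast_add_mul_goodFraction (b g : ℕ) : ((b : ℝ) + g) * goodFraction b g = g := by
  rcases Nat.eq_zero_or_pos (b + g) with hzero | hpos
  · obtain ⟨rfl, rfl⟩ : b = 0 ∧ g = 0 := by omega
    simp [goodFraction]
  · exact mul_div_cancel₀ _ (by exact_mod_cast hpos.ne')

lemma goodFraction_after_draw_le (b g : ℕ) :
    (g : ℝ) * goodFraction b (g - 1) + b * goodFraction (b - 1) g ≤ g := by
  rcases g with _ | g
  · simp [goodFraction]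
  rcases b with _ | b
  · simpa [goodFraction] using
      mul_le_of_le_one_right (by positivity : (0 : ℝ) ≤ g + 1) (div_self_le_one (g : ℝ))
  · apply le_of_eq
    simp only [goodFraction, Nat.add_sub_cancel]
    push_cast
    field_simp
    ring

lemma V_le_goodFraction (t : ℕ) : ∀ b g : ℕ, b + g ≤ t → V t b g ≤ goodFraction b g := by
  induction t with
  | zero =>
    intro b g h
    obtain ⟨rfl, rfl⟩ : b = 0 ∧ g = 0 := by omega
    simp [V, goodFraction]
  | succ t ih =>
    intro b g h
    have ht : (0 : ℝ) < t + 1 := by positivity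
    have hrest : (1 - ((b : ℝ) + g) / (t + 1)) * V t b g
        ≤ (1 - ((b : ℝ) + g) / (t + 1)) * goodFraction b g := by
      rcases h.lt_or_eq with hlt | heq
      · refine mul_le_mul_of_nonneg_left (ih b g (by omega)) ?_
        rw [sub_nonneg, div_le_one ht]
        exact_mod_cast hlt.le
      · rw [show ((b : ℝ) + g) = t + 1 by exact_mod_cast heq, div_self ht.ne']
        simp
    have hgood : (g : ℝ) / (t + 1) * V t b (g - 1) ≤ (g : ℝ) / (t + 1) * goodFraction b (g - 1) := by
      rcases g with _ | g
      · simp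
      · exact mul_le_mul_of_nonneg_left (ih b g (by omega)) (by positivity)
    have hbad : (b : ℝ) / (t + 1) * V t (b - 1) g ≤ (b : ℝ) / (t + 1) * goodFraction (b - 1) g := by
      rcases b with _ | b
      · simp
      · exact mul_le_mul_of_nonneg_left (ih b g (by omega)) (by positivity)
    have hcommit : (1 - ((b : ℝ) + g) / (t + 1)) * goodFraction b g + g / (t + 1)
        = goodFraction b g := by
      rw [sub_mul, one_mul, div_mul_eq_mul_div, natCast_add_mul_goodFraction]
      ring
    have hdraw : (g : ℝ) / (t + 1) * goodFraction b (g - 1) + b / (t + 1) * goodFraction (b - 1) g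
        ≤ g / (t + 1) := by
      rw [div_mul_eq_mul_div, div_mul_eq_mul_div, ← add_div]
      exact div_le_div_of_nonneg_right (goodFraction_after_draw_le b g) ht.le
    exact max_le (by linarith) (by linarith)

theorem stmt_11_general (t b g : ℕ) (h2 : b + g ≤ t) :
    V t b g ≤ (g : ℝ) / ((b : ℝ) + g) :=
  V_le_goodFraction t b g h2

/-- For all `t, b, g` with `1 ≤ b + g ≤ t`, the optimal probability of
accepting a good option is at most `g/(b+g)`. -/
theorem stmt_11 (t b g : ℕ) (h1 : 1 ≤ b + g) (h2 : b + g ≤ t) :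
    V t b g ≤ (g : ℝ) / ((b : ℝ) + g) :=
  stmt_11_general t b g h2
end

section
/- Let n \ge 3 be an integer, set x = \sqrt{\ln n}/n and k = \lceil \ln(1/x) \rceil. Then x \in (0, 1), k \ge 1, k \cdot x^{-1/k} + n \cdot x \le e \cdot \ln n + e + \sqrt{\ln n}, and 1 - (1 - x)^n \ge 1 - e^{-\sqrt{\ln n}}. -/
/-- Parameter choice in the refined i.i.d. prophet analysis: for an integer
`n ≥ 3`, with `x = √(ln n)/n` and `k = ⌈ln(1/x)⌉`, we have `x ∈ (0,1)`,
`k ≥ 1`, `k · x^{-1/k} + n·x ≤ e·ln n + e + √(ln n)` and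
`1 - (1-x)^n ≥ 1 - e^{-√(ln n)}`. -/
theorem stmt_16 (n : ℕ) (hn : 3 ≤ n) (x : ℝ) (hx : x = Real.sqrt (Real.log n) / n)
    (k : ℕ) (hk : k = ⌈Real.log (1 / x)⌉₊) :
    0 < x ∧ x < 1 ∧ 1 ≤ k ∧
    (k : ℝ) * x ^ (-(1 : ℝ) / k) + n * x
      ≤ Real.exp 1 * Real.log n + Real.exp 1 + Real.sqrt (Real.log n) ∧
    1 - Real.exp (-Real.sqrt (Real.log n)) ≤ 1 - (1 - x) ^ n := by
  have hn3 : (3:ℝ) ≤ n := by exact_mod_cast hn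
  have hnpos : (0:ℝ) < n := by linarith
  have hlogn : 1 ≤ Real.log n := by
    rw [Real.le_log_iff_exp_le hnpos]
    have := Real.exp_one_lt_d9
    linarith
  have hs1 : 1 ≤ Real.sqrt (Real.log n) := by
    rw [show (1:ℝ) = Real.sqrt 1 by simp]
    exact Real.sqrt_le_sqrt hlogn
  have hspos : 0 < Real.sqrt (Real.log n) := by linarith
  have hxpos : 0 < x := by rw [hx]; exact div_pos hspos hnpos
  have hx1 : x < 1 := by
    rw [hx, div_lt_one hnpos]
    calc Real.sqrt (Real.log n) ≤ Real.sqrt n :=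
          Real.sqrt_le_sqrt (by nlinarith [Real.log_le_sub_one_of_pos hnpos])
      _ < n := (Real.sqrt_lt' hnpos).mpr (by nlinarith)
  have hnx : (n:ℝ) * x = Real.sqrt (Real.log n) := by
    rw [hx]; field_simp
  set L := Real.log (1/x) with hL
  have hLpos : 0 < L := Real.log_pos (one_lt_one_div hxpos hx1)
  have hkpos : 0 < k := by
    rw [hk]; exact Nat.ceil_pos.mpr hLpos
  have hkR : (0:ℝ) < k := by exact_mod_cast hkpos
  have hkL : L ≤ k := by rw [hk]; exact Nat.le_ceil L
  have hkL2 : (k:ℝ) < L + 1 := by rw [hk]; exact Nat.ceil_lt_add_one hLpos.le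
  have hLle : L ≤ Real.log n := by
    have : (1:ℝ)/x = n / Real.sqrt (Real.log n) := by
      rw [hx]; field_simp
    rw [hL, this, Real.log_div (by positivity) (by positivity)]
    have := Real.log_nonneg hs1
    linarith
  have hrpow : x ^ (-(1:ℝ)/k) ≤ Real.exp 1 := by
    rw [Real.rpow_def_of_pos hxpos]
    apply Real.exp_le_exp.mpr
    have hlx : Real.log x = -L := by rw [hL, one_div, Real.log_inv]; ring
    rw [hlx]
    have h4 : -L * (-1/(k:ℝ)) = L/k := by ring
    rw [h4, div_le_one hkR]
    linarith
  have hrpow0 : 0 ≤ x ^ (-(1:ℝ)/k) := Real.rpow_nonneg hxpos.le _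
  have hepos : (0:ℝ) < Real.exp 1 := Real.exp_pos 1
  refine ⟨hxpos, hx1, hkpos, ?_, ?_⟩
  · have h1 : (k:ℝ) * x ^ (-(1:ℝ)/k) ≤ (L+1) * Real.exp 1 := by
      calc (k:ℝ) * x ^ (-(1:ℝ)/k) ≤ (k:ℝ) * Real.exp 1 :=
            mul_le_mul_of_nonneg_left hrpow hkR.le
        _ ≤ (L+1) * Real.exp 1 := by nlinarith
    have h2 : (L+1) * Real.exp 1 ≤ Real.exp 1 * Real.log n + Real.exp 1 := by
      nlinarith
    rw [hnx]; linarith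
  · have h0 : (0:ℝ) ≤ 1 - x := by linarith
    have h1 : 1 - x ≤ Real.exp (-x) := by
      have := Real.add_one_le_exp (-x); linarith
    have h2 : (1-x)^n ≤ Real.exp (-x) ^ n := pow_le_pow_left₀ h0 h1 n
    have h3 : Real.exp (-x) ^ n = Real.exp (-Real.sqrt (Real.log n)) := by
      rw [← Real.exp_nat_mul, ← hnx]; ring_nf
    linarith [h3 ▸ h2]
end
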